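/- arXiv:1206.1801 — 13 statements merged into one kernel-verified Lean document; each statement's English description precedes it below -/
import Mathlib

section
/- For every real t ≥ 1 and every real x with x ≤ -1 or x > 0, one has (1 + 1/(t·x + t - 1))^t ≤ 1 + 1/x. -/
/-!
Put `u = x + 1`. Bernoulli's inequality `1 + t s ≤ (1 + s) ^ t` with `s = -1 / (t u)` gives
`1 - 1 / u ≤ (1 - 1 / (t u)) ^ t`, and both sides are positive when `u < 0` or `1 < u`.
Taking reciprocals, with `(1 - 1 / a)⁻¹ = 1 + 1 / (a - 1)`, yields the claim.
The boundary case `x = -1` reads `0 ^ t ≤ 0`.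
-/

open Real

lemma inv_one_sub_inv {a : ℝ} (ha₀ : a ≠ 0) (ha₁ : a ≠ 1) :
    (1 - a⁻¹)⁻¹ = 1 + (a - 1)⁻¹ := by
  have : a - 1 ≠ 0 := sub_ne_zero.mpr ha₁
  field_simp
  ring

lemma one_sub_inv_le_rpow_one_sub_inv_mul {t u : ℝ} (ht : 1 ≤ t) (hu : (t * u)⁻¹ ≤ 1) :
    1 - u⁻¹ ≤ (1 - (t * u)⁻¹) ^ t := by
  have hts : t * -(t * u)⁻¹ = -u⁻¹ := by
    rw [mul_neg, mul_inv, ← mul_assoc, mul_inv_cancel₀ (by positivity), one_mul]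
  have bernoulli := one_add_mul_self_le_rpow_one_add (s := -(t * u)⁻¹) (by linarith) ht
  rwa [hts, ← sub_eq_add_neg, ← sub_eq_add_neg] at bernoulli

lemma one_add_inv_mul_sub_one_rpow_le {t u : ℝ} (ht : 1 ≤ t) (hu : u < 0 ∨ 1 < u) :
    (1 + (t * u - 1)⁻¹) ^ t ≤ 1 + (u - 1)⁻¹ := by
  have htu : (t * u)⁻¹ < 1 := by
    rcases hu with hu | hu
    · exact (inv_lt_zero.mpr (mul_neg_of_pos_of_neg (by linarith) hu)).trans one_pos
    · exact inv_lt_one_of_one_lt₀ (by nlinarith)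
  have hpos : 0 < 1 - u⁻¹ := by
    rcases hu with hu | hu
    · linarith [inv_lt_zero.mpr hu]
    · linarith [inv_lt_one_of_one_lt₀ hu]
  have hu₀ : u ≠ 0 := by rintro rfl; rcases hu with hu | hu <;> linarith
  have hu₁ : u ≠ 1 := by rintro rfl; simp at hpos
  have htu₀ : t * u ≠ 0 := mul_ne_zero (by positivity) hu₀
  have htu₁ : t * u ≠ 1 := by rintro h; simp [h] at htu
  calc (1 + (t * u - 1)⁻¹) ^ t = ((1 - (t * u)⁻¹) ^ t)⁻¹ := by
        rw [← inv_rpow (by linarith), inv_one_sub_inv htu₀ htu₁]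
    _ ≤ (1 - u⁻¹)⁻¹ := inv_anti₀ hpos (one_sub_inv_le_rpow_one_sub_inv_mul ht htu.le)
    _ = 1 + (u - 1)⁻¹ := inv_one_sub_inv hu₀ hu₁

theorem rpow_ineq_one (t x : ℝ) (ht : 1 ≤ t) (hx : x ≤ -1 ∨ 0 < x) :
    (1 + 1 / (t * x + t - 1)) ^ t ≤ 1 + 1 / x := by
  rcases eq_or_ne x (-1) with rfl | hx₁
  · norm_num [zero_rpow (by positivity : t ≠ 0)]
  have hu : x + 1 < 0 ∨ 1 < x + 1 := by
    rcases hx with hx | hx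
    · exact .inl (by linarith [lt_of_le_of_ne hx hx₁])
    · exact .inr (by linarith)
  have key := one_add_inv_mul_sub_one_rpow_le ht hu
  rwa [show t * (x + 1) - 1 = t * x + t - 1 by ring, add_sub_cancel_right, ← one_div,
    ← one_div] at key
end

section
/- For every real t ≥ 1 and every real x with 0 ≤ x ≤ 2, one has (1 + x/t)^t ≤ 1 + 2·t·x/((1-t)·x + 2·t), with equality when x = 0 or t = 1. -/
/-!
With `u = x / t` and the denominator cleared, the inequality reads
`(2 + (1 - t) u) (1 + u)^t ≤ 2 + (1 + t) u` for `u ≥ 0`. The difference of the two sides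
vanishes at `u = 0`, and its derivative `(1 + t) ((1 + u)^(t-1) (1 + (1 - t) u) - 1)` is
nonpositive by Bernoulli's inequality.
-/

open Set

namespace Real

variable {t u : ℝ}

theorem one_add_rpow_sub_one_mul_le_one (ht : 1 ≤ t) (hu : 0 ≤ u) :
    (1 + u) ^ (t - 1) * (1 + (1 - t) * u) ≤ 1 := by
  have hpos : 0 < 1 + u := by linarith
  -- Bernoulli's inequality for the base `(1 + u)⁻¹ = 1 - u / (1 + u)`
  have hbern := one_add_mul_self_le_rpow_one_add
    (show -1 ≤ -(u / (1 + u)) by rw [neg_le_neg_iff, div_le_one hpos]; linarith) ht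
  have hbase : 1 + -(u / (1 + u)) = (1 + u)⁻¹ := by field_simp; ring
  have hlhs : 1 + t * -(u / (1 + u)) = (1 + (1 - t) * u) / (1 + u) := by field_simp; ring
  rw [hbase, hlhs, inv_rpow hpos.le] at hbern
  calc (1 + u) ^ (t - 1) * (1 + (1 - t) * u)
      = (1 + u) ^ t * ((1 + (1 - t) * u) / (1 + u)) := by
        rw [rpow_sub_one hpos.ne']; ring
    _ ≤ (1 + u) ^ t * ((1 + u) ^ t)⁻¹ := by gcongr
    _ = 1 := mul_inv_cancel₀ (rpow_pos_of_pos hpos t).ne'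

theorem hasDerivAt_two_add_mul_mul_one_add_rpow (hu : -1 < u) :
    HasDerivAt (fun u ↦ (2 + (1 - t) * u) * (1 + u) ^ t)
      ((1 + t) * ((1 + u) ^ (t - 1) * (1 + (1 - t) * u))) u := by
  have hpos : 0 < 1 + u := by linarith
  have hlin : HasDerivAt (fun u ↦ 2 + (1 - t) * u) (1 - t) u := by
    simpa using ((hasDerivAt_id u).const_mul (1 - t)).const_add 2
  have hpow : HasDerivAt (fun u ↦ (1 + u) ^ t) (t * (1 + u) ^ (t - 1)) u := by
    simpa using ((hasDerivAt_id u).const_add 1).rpow_const (p := t) (Or.inl hpos.ne')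
  refine (hlin.mul hpow).congr_deriv ?_
  rw [show (1 + u) ^ t = (1 + u) ^ (t - 1) * (1 + u) by
    rw [← rpow_add_one hpos.ne', sub_add_cancel]]
  ring

theorem two_add_mul_mul_one_add_rpow_le (ht : 1 ≤ t) (hu : 0 ≤ u) :
    (2 + (1 - t) * u) * (1 + u) ^ t ≤ 2 + (1 + t) * u := by
  set φ : ℝ → ℝ := fun u ↦ (2 + (1 - t) * u) * (1 + u) ^ t - (1 + t) * u
  have hderiv (v : ℝ) (hv : 0 ≤ v) :
      HasDerivAt φ ((1 + t) * ((1 + v) ^ (t - 1) * (1 + (1 - t) * v) - 1)) v := by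
    refine ((hasDerivAt_two_add_mul_mul_one_add_rpow (by linarith)).sub
      ((hasDerivAt_id v).const_mul (1 + t))).congr_deriv ?_
    ring
  have hanti : AntitoneOn φ (Ici 0) := by
    refine antitoneOn_of_hasDerivWithinAt_nonpos (convex_Ici 0)
      (fun v hv ↦ (hderiv v hv).continuousAt.continuousWithinAt)
      (fun v hv ↦ (hderiv v (interior_subset hv)).hasDerivWithinAt) fun v hv ↦ ?_
    have := one_add_rpow_sub_one_mul_le_one ht (interior_subset hv : 0 ≤ v)
    nlinarith
  have := hanti (mem_Ici.2 le_rfl) hu hu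
  norm_num [φ] at this
  linarith

end Real

theorem rpow_ineq_two (t x : ℝ) (ht : 1 ≤ t) (hx0 : 0 ≤ x) (hx2 : x ≤ 2) :
    (1 + x / t) ^ t ≤ 1 + 2 * t * x / ((1 - t) * x + 2 * t) ∧
      (x = 0 ∨ t = 1 → (1 + x / t) ^ t = 1 + 2 * t * x / ((1 - t) * x + 2 * t)) := by
  have ht0 : 0 < t := by linarith
  have hden : 0 < (1 - t) * x + 2 * t := by nlinarith
  refine ⟨?_, ?_⟩
  · have key := Real.two_add_mul_mul_one_add_rpow_le ht (div_nonneg hx0 ht0.le)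
    rw [one_add_div hden.ne', le_div_iff₀ hden]
    calc (1 + x / t) ^ t * ((1 - t) * x + 2 * t)
        = t * ((2 + (1 - t) * (x / t)) * (1 + x / t) ^ t) := by field_simp; ring
      _ ≤ t * (2 + (1 + t) * (x / t)) := by gcongr
      _ = (1 - t) * x + 2 * t + 2 * t * x := by field_simp; ring
  · rintro (rfl | rfl) <;> norm_num
end

section
/- For every real a with 0 ≤ a ≤ 1 and every real x with x ≤ -1 or x > 0, one has (1 + 1/x)^a ≥ 1 + a/(x + 1 - a). -/
/-! Put `y = 1 + 1/x`. For `x ≠ -1` we have `y > 0`, and Bernoulli's inequality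
`(y⁻¹)^a ≤ 1 + a (y⁻¹ - 1)` inverts to `y^a ≥ (a y⁻¹ + 1 - a)⁻¹`, which is exactly
`1 + a/(x + 1 - a)`. At `x = -1` both sides vanish (for `a > 0`). -/

open Real

/-- The weighted harmonic mean of `y` and `1` is at most their weighted geometric mean. -/
theorem inv_mul_inv_add_one_sub_le_rpow {y a : ℝ} (hy : 0 < y) (ha0 : 0 ≤ a) (ha1 : a ≤ 1) :
    (a * y⁻¹ + (1 - a))⁻¹ ≤ y ^ a := by
  have hy' : 0 < y⁻¹ := inv_pos.mpr hy
  have bernoulli : (y⁻¹) ^ a ≤ 1 + a * (y⁻¹ - 1) := by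
    simpa using rpow_one_add_le_one_add_mul_self (s := y⁻¹ - 1) (by linarith) ha0 ha1
  calc (a * y⁻¹ + (1 - a))⁻¹ = (1 + a * (y⁻¹ - 1))⁻¹ := by ring
    _ ≤ ((y⁻¹) ^ a)⁻¹ := inv_anti₀ (rpow_pos_of_pos hy' a) bernoulli
    _ = y ^ a := by rw [inv_rpow hy.le, inv_inv]

theorem rpow_ineq_three (a x : ℝ) (ha0 : 0 ≤ a) (ha1 : a ≤ 1)
    (hx : x ≤ -1 ∨ 0 < x) :
    (1 + 1 / x) ^ a ≥ 1 + a / (x + 1 - a) := by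
  obtain rfl | hx' : x = -1 ∨ x < -1 ∨ 0 < x := by
    rcases hx with h | h
    exacts [h.eq_or_lt.imp_right Or.inl, Or.inr (Or.inr h)]
  · rcases ha0.eq_or_lt with rfl | ha
    · simp
    · norm_num [zero_rpow ha.ne', ha.ne']
  have hx0 : x ≠ 0 := by rcases hx' with h | h <;> linarith
  have hy : 0 < 1 + 1 / x := by
    rcases hx' with h | h
    · have : -1 < 1 / x := by rw [lt_div_iff_of_neg (by linarith)]; linarith
      linarith
    · positivity
  have hx1 : x + 1 ≠ 0 := by rcases hx' with h | h <;> linarith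
  have hxa : x + 1 - a ≠ 0 := by rcases hx' with h | h <;> linarith
  have hmean : a * (1 + 1 / x)⁻¹ + (1 - a) = (x + 1 - a) / (x + 1) := by
    rw [one_add_div hx0, inv_div]
    field_simp
    ring
  have harm : 1 + a / (x + 1 - a) = (a * (1 + 1 / x)⁻¹ + (1 - a))⁻¹ := by
    rw [hmean, inv_div]
    field_simp
    ring
  rw [ge_iff_le, harm]
  exact inv_mul_inv_add_one_sub_le_rpow hy ha0 ha1
end

section
/- For every real a with 0 ≤ a ≤ 1 and every real x > 0, one has (1 + 1/x)^a ≥ 1 + a/(x + (1-a)/2). -/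
/-!
With `v = 1 + 1/x ≥ 1` the right-hand side is the Möbius expression
`((1 + a) v + (1 - a)) / ((1 - a) v + (1 + a))`, so the claim becomes the inequality
`(1 + a) v + (1 - a) ≤ v ^ a ((1 - a) v + (1 + a))` for `v ≥ 1`. Both sides agree at `v = 1`,
and the derivative of their difference is `(1 + a) ((1 - a) v ^ a + a v ^ (a - 1) - 1)`, which is
nonnegative by weighted AM-GM:
`1 = (v ^ a) ^ (1 - a) (v ^ (a - 1)) ^ a ≤ (1 - a) v ^ a + a v ^ (a - 1)`.
-/

open Real Set

namespace Real

variable {a : ℝ}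

lemma one_le_one_sub_mul_rpow_add_mul_rpow_sub_one (ha0 : 0 ≤ a) (ha1 : a ≤ 1) {w : ℝ}
    (hw : 0 < w) : 1 ≤ (1 - a) * w ^ a + a * w ^ (a - 1) :=
  calc (1 : ℝ) = (w ^ a) ^ (1 - a) * (w ^ (a - 1)) ^ a := by
        rw [← rpow_mul hw.le, ← rpow_mul hw.le, ← rpow_add hw,
          show a * (1 - a) + (a - 1) * a = 0 by ring, rpow_zero]
    _ ≤ (1 - a) * w ^ a + a * w ^ (a - 1) :=
        geom_mean_le_arith_mean2_weighted (by linarith) ha0 (rpow_nonneg hw.le a)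
          (rpow_nonneg hw.le (a - 1)) (by ring)

lemma hasDerivAt_rpow_mul_sub (a : ℝ) {w : ℝ} (hw : 0 < w) :
    HasDerivAt (fun v => v ^ a * ((1 - a) * v + (1 + a)) - ((1 + a) * v + (1 - a)))
      ((1 + a) * ((1 - a) * w ^ a + a * w ^ (a - 1) - 1)) w := by
  have hpow : HasDerivAt (fun v => v ^ a) (a * w ^ (a - 1)) w :=
    hasDerivAt_rpow_const (Or.inl hw.ne')
  have hlin (c d : ℝ) : HasDerivAt (fun v => c * v + d) c w := by
    simpa using ((hasDerivAt_id w).const_mul c).add_const d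
  refine ((hpow.mul (hlin (1 - a) (1 + a))).sub (hlin (1 + a) (1 - a))).congr_deriv ?_
  rw [rpow_sub_one hw.ne']
  field_simp
  ring

lemma add_le_rpow_mul_add (ha0 : 0 ≤ a) (ha1 : a ≤ 1) {v : ℝ} (hv : 1 ≤ v) :
    (1 + a) * v + (1 - a) ≤ v ^ a * ((1 - a) * v + (1 + a)) := by
  set G : ℝ → ℝ := fun v => v ^ a * ((1 - a) * v + (1 + a)) - ((1 + a) * v + (1 - a))
  have hG : ∀ w ∈ Ici (1 : ℝ),
      HasDerivAt G ((1 + a) * ((1 - a) * w ^ a + a * w ^ (a - 1) - 1)) w :=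
    fun w hw => hasDerivAt_rpow_mul_sub a (zero_lt_one.trans_le hw)
  have hmono : MonotoneOn G (Ici 1) := by
    refine monotoneOn_of_hasDerivWithinAt_nonneg (convex_Ici 1)
      (fun w hw => (hG w hw).continuousAt.continuousWithinAt)
      (fun w hw => (hG w (interior_subset hw)).hasDerivWithinAt) fun w hw => ?_
    have hw0 : 0 < w := zero_lt_one.trans_le (interior_subset hw)
    have hamgm := one_le_one_sub_mul_rpow_add_mul_rpow_sub_one ha0 ha1 hw0
    exact mul_nonneg (by linarith) (by linarith)
  have hG1v := hmono self_mem_Ici hv hv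
  simp only [G, one_rpow] at hG1v
  linarith

end Real

theorem rpow_ineq_four (a x : ℝ) (ha0 : 0 ≤ a) (ha1 : a ≤ 1) (hx : 0 < x) :
    (1 + 1 / x) ^ a ≥ 1 + a / (x + (1 - a) / 2) := by
  set v := 1 + 1 / x with hv
  have hv1 : 1 ≤ v := le_add_of_nonneg_right (by positivity)
  have hden : 0 < (1 - a) * v + (1 + a) := by nlinarith
  have hmobius : 1 + a / (x + (1 - a) / 2) = ((1 + a) * v + (1 - a)) / ((1 - a) * v + (1 + a)) := by
    rw [eq_div_iff hden.ne', hv]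
    have : 0 < x * 2 + (1 - a) := by linarith
    field_simp
    ring
  rw [ge_iff_le, hmobius, div_le_iff₀ hden]
  exact add_le_rpow_mul_add ha0 ha1 hv1
end

section
/- For every real a with 0 ≤ a ≤ 1 and every real x ≤ -1, one has (1 + 1/x)^a ≤ 1 + a/(x + (1-a)/2), with equality only if a = 0 or a = 1. -/
/-!
Writing `x = -(1 + r) / (2r)` with `r ∈ (0, 1]`, the two sides become `((1 - r) / (1 + r)) ^ a`
and `(1 - ar) / (1 + ar)`. After taking logarithms the claim reads `artanh (a r) ≤ a artanh r`,
which holds termwise in the series `artanh r = ∑ r ^ (2k+1) / (2k+1)` because `a ^ (2k+1) ≤ a`,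
strictly from the cubic term on when `0 < a < 1`. At `r = 1` the left side is `0`.
-/

open Real Set

theorem log_one_add_mul_sub_log_one_sub_mul_lt {a r : ℝ} (ha0 : 0 < a) (ha1 : a < 1)
    (hr0 : 0 < r) (hr1 : r < 1) :
    log (1 + a * r) - log (1 - a * r) < a * (log (1 + r) - log (1 - r)) := by
  have hr : |r| < 1 := by rw [abs_lt]; constructor <;> linarith
  have har : |a * r| < 1 := by
    rw [abs_mul, abs_of_pos ha0]; nlinarith [abs_nonneg r]
  refine hasSum_lt (i := 1) (fun k => ?_) ?_ (hasSum_log_sub_log_of_abs_lt_one har)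
    ((hasSum_log_sub_log_of_abs_lt_one hr).mul_left a)
  · have hpow := pow_le_of_le_one ha0.le ha1.le (n := 2 * k + 1) (by omega)
    have hc : 0 ≤ 2 * (1 / (2 * (k : ℝ) + 1)) * r ^ (2 * k + 1) := by positivity
    simp only [mul_pow]
    nlinarith [mul_le_mul_of_nonneg_right hpow hc]
  · have hpow := pow_lt_self_of_lt_one₀ ha0 ha1 (n := 2 * 1 + 1) (by norm_num)
    have hc : 0 < 2 * (1 / (2 * ((1 : ℕ) : ℝ) + 1)) * r ^ (2 * 1 + 1) := by positivity
    simp only [mul_pow]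
    nlinarith [mul_lt_mul_of_pos_right hpow hc]

theorem rpow_one_sub_div_one_add_lt {a r : ℝ} (ha0 : 0 < a) (ha1 : a < 1)
    (hr0 : 0 < r) (hr1 : r ≤ 1) :
    ((1 - r) / (1 + r)) ^ a < (1 - a * r) / (1 + a * r) := by
  have hRHS : 0 < (1 - a * r) / (1 + a * r) := div_pos (by nlinarith) (by positivity)
  rcases hr1.eq_or_lt with rfl | hr1
  · rwa [sub_self, zero_div, zero_rpow ha0.ne']
  rw [← log_lt_log_iff (by positivity) hRHS, log_rpow (by positivity),
    log_div (by linarith) (by linarith), log_div (by nlinarith) (by positivity)]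
  linarith [log_one_add_mul_sub_log_one_sub_mul_lt ha0 ha1 hr0 hr1]

theorem exists_mem_Ioc_eq_neg_one_add_div_two_mul {x : ℝ} (hx : x ≤ -1) :
    ∃ r ∈ Ioc (0 : ℝ) 1, x = -(1 + r) / (2 * r) := by
  have hx1 : 2 * x + 1 < 0 := by linarith
  refine ⟨-1 / (2 * x + 1), ⟨div_pos_of_neg_of_neg (by norm_num) hx1, ?_⟩, ?_⟩
  · rw [div_le_one_of_neg hx1]; linarith
  · rw [eq_div_iff (by simp [hx1.ne])]
    linear_combination mul_div_cancel₀ (-1 : ℝ) hx1.ne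

theorem rpow_ineq_five (a x : ℝ) (ha0 : 0 ≤ a) (ha1 : a ≤ 1) (hx : x ≤ -1) :
    (1 + 1 / x) ^ a ≤ 1 + a / (x + (1 - a) / 2) ∧
      ((1 + 1 / x) ^ a = 1 + a / (x + (1 - a) / 2) → a = 0 ∨ a = 1) := by
  rcases ha0.eq_or_lt with rfl | ha0
  · simp
  rcases ha1.eq_or_lt with rfl | ha1
  · simp
  obtain ⟨r, ⟨hr0, hr1⟩, rfl⟩ := exists_mem_Ioc_eq_neg_one_add_div_two_mul hx
  have h1r : 1 + r ≠ 0 := by positivity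
  have h1ar : 1 + a * r ≠ 0 := by positivity
  have hlhs : 1 + 1 / (-(1 + r) / (2 * r)) = (1 - r) / (1 + r) := by
    field_simp; ring
  have hrhs : 1 + a / (-(1 + r) / (2 * r) + (1 - a) / 2) = (1 - a * r) / (1 + a * r) := by
    rw [show -(1 + r) / (2 * r) + (1 - a) / 2 = -(1 + a * r) / (2 * r) by field_simp; ring]
    field_simp; ring
  have hlt := rpow_one_sub_div_one_add_lt ha0 ha1 hr0 hr1
  rw [← hlhs, ← hrhs] at hlt
  exact ⟨hlt.le, fun h => absurd h hlt.ne⟩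
end

section
/- For all real σ with 0 < σ < 1/2 and all real t ≥ 1/2, one has ((1-σ)² + t²)/(σ² + t²) < (1 + 1/((σ-1)σ + t²))^(1-2σ). -/
/-!
Put `x = (σ - 1)σ + t²`, `u = 1 / (2x + 1)` and `s = 1 - 2σ`, so `0 < s, u < 1`. Then the ratio is
`(1 + su) / (1 - su)` and the base is `(1 + u) / (1 - u)`, so after taking logarithms the claim
reads `artanh (s u) < s · artanh u`. This follows by comparing the power series
`artanh y = ∑ y^(2k+1) / (2k+1)` term by term, since `s^(2k+1) ≤ s` with strict inequality for `k ≥ 1`.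
-/

open Real

theorem log_one_add_mul_div_one_sub_mul_lt_mul_log {s u : ℝ} (hs0 : 0 < s) (hs1 : s < 1)
    (hu0 : 0 < u) (hu1 : u < 1) :
    log ((1 + s * u) / (1 - s * u)) < s * log ((1 + u) / (1 - u)) := by
  have hsu : s * u < u := mul_lt_of_lt_one_left hu0 hs1
  have hsu0 : 0 < s * u := mul_pos hs0 hu0
  rw [log_div (by linarith) (by linarith), log_div (by linarith) (by linarith)]
  set c : ℕ → ℝ := fun k => 2 * (1 / (2 * k + 1)) * u ^ (2 * k + 1)
  have hc (k : ℕ) : 0 < c k := by positivity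
  have hterm (k : ℕ) :
      2 * (1 / (2 * (k : ℝ) + 1)) * (s * u) ^ (2 * k + 1) = s ^ (2 * k + 1) * c k := by
    rw [mul_pow]; ring
  refine hasSum_lt (i := 1) (fun k => ?_) ?_
    (hasSum_log_sub_log_of_abs_lt_one (abs_lt.2 ⟨by linarith, by linarith⟩))
    ((hasSum_log_sub_log_of_abs_lt_one (abs_lt.2 ⟨by linarith, hu1⟩)).mul_left s)
  · rw [hterm]
    exact mul_le_mul_of_nonneg_right (pow_le_of_le_one hs0.le hs1.le (by omega)) (hc k).le
  · rw [hterm]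
    exact mul_lt_mul_of_pos_right (pow_lt_self_of_lt_one₀ hs0 hs1 (by norm_num)) (hc 1)

theorem ratio_lt_rpow (σ t : ℝ) (hσ0 : 0 < σ) (hσ : σ < 1 / 2) (ht : 1 / 2 ≤ t) :
    ((1 - σ) ^ 2 + t ^ 2) / (σ ^ 2 + t ^ 2) <
      (1 + 1 / ((σ - 1) * σ + t ^ 2)) ^ (1 - 2 * σ) := by
  set x := (σ - 1) * σ + t ^ 2
  have hx : 0 < x := by nlinarith
  set u := 1 / (2 * x + 1)
  set s := 1 - 2 * σ
  have hu : u * (2 * x + 1) = 1 := one_div_mul_cancel (by positivity)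
  have hu0 : 0 < u := by positivity
  have hu1 : u < 1 := (div_lt_one (by positivity)).2 (by linarith)
  have hsu : s * u < 1 := by nlinarith
  -- With `A = σ² + t²` and `B = (1 - σ)² + t²` one has `B - A = s` and `B + A = 2x + 1`.
  have hratio : ((1 - σ) ^ 2 + t ^ 2) / (σ ^ 2 + t ^ 2) = (1 + s * u) / (1 - s * u) := by
    rw [div_eq_div_iff (by positivity) (by linarith)]
    linear_combination (-s) * hu
  have hbase : 1 + 1 / x = (1 + u) / (1 - u) := by
    rw [eq_div_iff (by linarith), one_add_div hx.ne', div_mul_eq_mul_div, div_eq_iff hx.ne']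
    linear_combination -hu
  rw [lt_rpow_iff_log_lt (by positivity) (add_pos one_pos (one_div_pos.2 hx)), hratio, hbase]
  exact log_one_add_mul_div_one_sub_mul_lt_mul_log (by linarith) (by linarith) hu0 hu1
end

section
/- For all real σ with 0 < σ < 1/2, all real t, and all real x ≥ (1+√3)/4, one has ((2x+1-σ)² + t²)/((2x+σ)² + t²) < { ((2x+1)/(2x))² · (1 - (1+4x)((σ-1)σ + t²)/((1+2x)²((σ-1)σ + t² + 4x²))) }^(1-2σ). -/
/-!
With `V = (σ - 1)σ + t² + 4x²` and `s = 4x + 1`, the numerator and denominator on the left are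
`V + (1 - σ)s` and `V + σs`, and the base of the power on the right is `(V + s)/V`. Putting
`r = s/V`, the claim becomes `(1 + (1 - σ)r)/(1 + σr) < (1 + r)^(1 - 2σ)`. The logarithm of the
right side minus that of the left vanishes at `r = 0` and has derivative
`σ(1 - σ)(1 - 2σ)r² / ((1 + r)(1 + (1 - σ)r)(1 + σr)) > 0`.
-/

open Real Set

noncomputable def logRatioGap (σ r : ℝ) : ℝ :=
  (1 - 2 * σ) * log (1 + r) - log (1 + (1 - σ) * r) + log (1 + σ * r)

section

variable {σ r : ℝ}

lemma hasDerivAt_logRatioGap (hσ0 : 0 ≤ σ) (hσ1 : σ ≤ 1) (hr : 0 ≤ r) :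
    HasDerivAt (logRatioGap σ)
      (σ * (1 - σ) * (1 - 2 * σ) * r ^ 2 / ((1 + r) * (1 + (1 - σ) * r) * (1 + σ * r))) r := by
  have h₁ : 0 < 1 + r := by linarith
  have h₂ : 0 < 1 + (1 - σ) * r := by nlinarith
  have h₃ : 0 < 1 + σ * r := by nlinarith
  have hderiv := ((((hasDerivAt_id r).const_add 1).log h₁.ne').const_mul (1 - 2 * σ)).sub
    ((((hasDerivAt_id r).const_mul (1 - σ)).const_add 1).log h₂.ne') |>.add
    ((((hasDerivAt_id r).const_mul σ).const_add 1).log h₃.ne')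
  refine hderiv.congr_deriv ?_
  simp only [id, mul_one]
  rw [mul_one_div, div_sub_div _ _ h₁.ne' h₂.ne', div_add_div _ _ (by positivity) h₃.ne',
    div_eq_div_iff (by positivity) (by positivity)]
  ring

lemma strictMonoOn_logRatioGap (hσ0 : 0 < σ) (hσ : σ < 1 / 2) :
    StrictMonoOn (logRatioGap σ) (Ici 0) := by
  have hderiv (r : ℝ) (hr : 0 ≤ r) := hasDerivAt_logRatioGap (r := r) hσ0.le (by linarith) hr
  refine strictMonoOn_of_deriv_pos (convex_Ici 0)
    (fun r hr => (hderiv r hr).continuousAt.continuousWithinAt) fun r hr => ?_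
  rw [interior_Ici, mem_Ioi] at hr
  rw [(hderiv r hr.le).deriv]
  have : 0 < 1 + (1 - σ) * r := by nlinarith
  have : 0 < 1 - 2 * σ := by linarith
  have : 0 < 1 - σ := by linarith
  positivity

lemma one_add_mul_div_one_add_mul_lt_rpow (hσ0 : 0 < σ) (hσ : σ < 1 / 2) (hr : 0 < r) :
    (1 + (1 - σ) * r) / (1 + σ * r) < (1 + r) ^ (1 - 2 * σ) := by
  have hgap := strictMonoOn_logRatioGap hσ0 hσ self_mem_Ici (mem_Ici.2 hr.le) hr
  have h₂ : 0 < 1 + (1 - σ) * r := by nlinarith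
  have h₃ : 0 < 1 + σ * r := by nlinarith
  simp only [logRatioGap, mul_zero, add_zero, log_one, sub_zero] at hgap
  rw [lt_rpow_iff_log_lt (by positivity) (by linarith), log_div h₂.ne' h₃.ne']
  linarith

lemma add_mul_div_add_mul_lt_rpow {V s : ℝ} (hσ0 : 0 < σ) (hσ : σ < 1 / 2) (hV : 0 < V)
    (hs : 0 < s) :
    (V + (1 - σ) * s) / (V + σ * s) < ((V + s) / V) ^ (1 - 2 * σ) := by
  convert one_add_mul_div_one_add_mul_lt_rpow hσ0 hσ (div_pos hs hV) using 1 <;> field_simp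

end

theorem ratio_lt_rpow' (σ t x : ℝ) (hσ0 : 0 < σ) (hσ : σ < 1 / 2)
    (hx : (1 + Real.sqrt 3) / 4 ≤ x) :
    ((2 * x + 1 - σ) ^ 2 + t ^ 2) / ((2 * x + σ) ^ 2 + t ^ 2) <
      (((2 * x + 1) / (2 * x)) ^ 2 *
          (1 - (1 + 4 * x) * ((σ - 1) * σ + t ^ 2) /
            ((1 + 2 * x) ^ 2 * ((σ - 1) * σ + t ^ 2 + 4 * x ^ 2)))) ^ (1 - 2 * σ) := by
  set V := (σ - 1) * σ + t ^ 2 + 4 * x ^ 2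
  have hx_quarter : 1 / 4 < x := by linarith [sqrt_pos.2 (show (0 : ℝ) < 3 by norm_num)]
  have hV : 0 < V := by nlinarith [sq_nonneg (σ - 1 / 2), sq_nonneg t]
  have hbase : ((2 * x + 1) / (2 * x)) ^ 2 *
      (1 - (1 + 4 * x) * ((σ - 1) * σ + t ^ 2) / ((1 + 2 * x) ^ 2 * V)) = (V + (4 * x + 1)) / V := by
    have : 0 < x := by linarith
    field_simp
    ring
  have hnum : (2 * x + 1 - σ) ^ 2 + t ^ 2 = V + (1 - σ) * (4 * x + 1) := by ring
  have hden : (2 * x + σ) ^ 2 + t ^ 2 = V + σ * (4 * x + 1) := by ring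
  rw [hbase, hnum, hden]
  exact add_mul_div_add_mul_lt_rpow hσ0 hσ hV (by linarith)
end

section
/- For all real σ with 0 < σ < 1/2 and all real t ≥ 12, one has (((1-σ)² + t²)/(σ² + t²)) · ∏_{n=1}^{3} ((2n+1-σ)² + t²)/((2n+σ)² + t²) < ( (1/4) · ∏_{n=1}^{3} ((2n+1)/(2n))² )^(1-2σ). -/
set_option maxHeartbeats 1000000

theorem prod_ratio_lt (σ t : ℝ) (hσ0 : 0 < σ) (hσ : σ < 1 / 2) (ht : 12 ≤ t) :
    (((1 - σ) ^ 2 + t ^ 2) / (σ ^ 2 + t ^ 2)) *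
        ∏ n ∈ Finset.Icc (1 : ℕ) 3,
          ((2 * (n : ℝ) + 1 - σ) ^ 2 + t ^ 2) / ((2 * (n : ℝ) + σ) ^ 2 + t ^ 2) <
      ((1 / 4 : ℝ) * ∏ n ∈ Finset.Icc (1 : ℕ) 3,
          ((2 * (n : ℝ) + 1) / (2 * (n : ℝ))) ^ 2) ^ (1 - 2 * σ) := by
  have hIcc : Finset.Icc (1 : ℕ) 3 = {1, 2, 3} := by decide
  rw [hIcc]
  norm_num [Finset.prod_insert, Finset.mem_insert]
  set s : ℝ := 1 - 2 * σ with hsdef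
  have hs0 : 0 < s := by simp [hsdef]; linarith
  have hs1 : s < 1 := by simp [hsdef]; linarith
  have ht2 : (144 : ℝ) ≤ t ^ 2 := by nlinarith
  -- denominators positive
  have hd0 : (0:ℝ) < σ ^ 2 + t ^ 2 := by positivity
  have hd1 : (0:ℝ) < (2 + σ) ^ 2 + t ^ 2 := by positivity
  have hd2 : (0:ℝ) < (4 + σ) ^ 2 + t ^ 2 := by positivity
  have hd3 : (0:ℝ) < (6 + σ) ^ 2 + t ^ 2 := by positivity
  -- bounds on each factor
  have h0 : ((1 - σ) ^ 2 + t ^ 2) / (σ ^ 2 + t ^ 2) < 1 + s / 144 := by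
    rw [div_lt_iff₀ hd0]; nlinarith [sq_nonneg σ, mul_pos hσ0 hσ0]
  have h1 : ((2 * (1:ℝ) + 1 - σ) ^ 2 + t ^ 2) / ((2 * (1:ℝ) + σ) ^ 2 + t ^ 2)
      < 1 + 5 * s / 148 := by
    rw [div_lt_iff₀ (by positivity)]; nlinarith [mul_pos hσ0 hσ0, mul_pos hσ0 hs0]
  have h2 : ((2 * (2:ℝ) + 1 - σ) ^ 2 + t ^ 2) / ((2 * (2:ℝ) + σ) ^ 2 + t ^ 2)
      < 1 + 9 * s / 160 := by
    rw [div_lt_iff₀ (by positivity)]; nlinarith [mul_pos hσ0 hσ0, mul_pos hσ0 hs0]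
  have h3 : ((2 * (3:ℝ) + 1 - σ) ^ 2 + t ^ 2) / ((2 * (3:ℝ) + σ) ^ 2 + t ^ 2)
      < 1 + 13 * s / 180 := by
    rw [div_lt_iff₀ (by positivity)]; nlinarith [mul_pos hσ0 hσ0, mul_pos hσ0 hs0]
  -- positivity of factors
  have p0 : (0:ℝ) < ((1 - σ) ^ 2 + t ^ 2) / (σ ^ 2 + t ^ 2) := by positivity
  have p1 : (0:ℝ) < ((2 * (1:ℝ) + 1 - σ) ^ 2 + t ^ 2) / ((2 * (1:ℝ) + σ) ^ 2 + t ^ 2) := by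
    positivity
  have p2 : (0:ℝ) < ((2 * (2:ℝ) + 1 - σ) ^ 2 + t ^ 2) / ((2 * (2:ℝ) + σ) ^ 2 + t ^ 2) := by
    positivity
  have p3 : (0:ℝ) < ((2 * (3:ℝ) + 1 - σ) ^ 2 + t ^ 2) / ((2 * (3:ℝ) + σ) ^ 2 + t ^ 2) := by
    positivity
  have hprod : (((1 - σ) ^ 2 + t ^ 2) / (σ ^ 2 + t ^ 2)) *
      (((2 * (1:ℝ) + 1 - σ) ^ 2 + t ^ 2) / ((2 * (1:ℝ) + σ) ^ 2 + t ^ 2) *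
        (((2 * (2:ℝ) + 1 - σ) ^ 2 + t ^ 2) / ((2 * (2:ℝ) + σ) ^ 2 + t ^ 2) *
          (((2 * (3:ℝ) + 1 - σ) ^ 2 + t ^ 2) / ((2 * (3:ℝ) + σ) ^ 2 + t ^ 2))))
      < (1 + s / 144) * ((1 + 5 * s / 148) * ((1 + 9 * s / 160) * (1 + 13 * s / 180))) := by
    apply mul_lt_mul'' h0 _ p0.le (by positivity)
    apply mul_lt_mul'' h1 _ p1.le (by positivity)
    exact mul_lt_mul'' h2 h3 p2.le p3.le
  have hpoly : (1 + s / 144) * ((1 + 5 * s / 148) * ((1 + 9 * s / 160) * (1 + 13 * s / 180)))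
      ≤ 1 + (2440501 / 13639680 : ℝ) * s := by
    have a2 : s * s ≤ s := mul_le_of_le_one_right hs0.le hs1.le
    have a3 : s * s * s ≤ s * s := mul_le_of_le_one_right (mul_nonneg hs0.le hs0.le) hs1.le
    have a4 : s * s * s * s ≤ s * s * s :=
      mul_le_of_le_one_right (mul_nonneg (mul_nonneg hs0.le hs0.le) hs0.le) hs1.le
    ring_nf
    ring_nf at a2 a3 a4
    linarith [a2, a3, a4]
  have hq : (2440501 / 13639680 : ℝ) < Real.log (1225 / 1024) := by
    rw [Real.lt_log_iff_exp_lt (by norm_num)]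
    have hb := Real.exp_bound' (x := (2440501 / 13639680 : ℝ)) (by norm_num) (by norm_num)
      (n := 4) (by norm_num)
    refine lt_of_le_of_lt hb ?_
    simp [Finset.sum_range_succ, Nat.factorial]
    norm_num
  have hrpow : ((1225 / 1024 : ℝ)) ^ s = Real.exp (Real.log (1225 / 1024) * s) :=
    Real.rpow_def_of_pos (by norm_num) s
  have key : (((1 - σ) ^ 2 + t ^ 2) / (σ ^ 2 + t ^ 2)) *
      (((2 * (1:ℝ) + 1 - σ) ^ 2 + t ^ 2) / ((2 * (1:ℝ) + σ) ^ 2 + t ^ 2) *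
        (((2 * (2:ℝ) + 1 - σ) ^ 2 + t ^ 2) / ((2 * (2:ℝ) + σ) ^ 2 + t ^ 2) *
          (((2 * (3:ℝ) + 1 - σ) ^ 2 + t ^ 2) / ((2 * (3:ℝ) + σ) ^ 2 + t ^ 2))))
      < ((1225 / 1024 : ℝ)) ^ s := by
    calc _ < 1 + (2440501 / 13639680 : ℝ) * s := lt_of_lt_of_le hprod hpoly
      _ < 1 + Real.log (1225 / 1024) * s := by
          have := mul_lt_mul_of_pos_right hq hs0; linarith
      _ ≤ Real.exp (Real.log (1225 / 1024) * s) := by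
          linarith [Real.add_one_le_exp (Real.log (1225 / 1024) * s)]
      _ = ((1225 / 1024 : ℝ)) ^ s := hrpow.symm
  calc ((1 - σ) ^ 2 + t ^ 2) / (σ ^ 2 + t ^ 2) *
      (((3 - σ) ^ 2 + t ^ 2) * (((5 - σ) ^ 2 + t ^ 2) * ((7 - σ) ^ 2 + t ^ 2)) /
        (((2 + σ) ^ 2 + t ^ 2) * (((4 + σ) ^ 2 + t ^ 2) * ((6 + σ) ^ 2 + t ^ 2))))
      = (((1 - σ) ^ 2 + t ^ 2) / (σ ^ 2 + t ^ 2)) *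
      (((2 * (1:ℝ) + 1 - σ) ^ 2 + t ^ 2) / ((2 * (1:ℝ) + σ) ^ 2 + t ^ 2) *
        (((2 * (2:ℝ) + 1 - σ) ^ 2 + t ^ 2) / ((2 * (2:ℝ) + σ) ^ 2 + t ^ 2) *
          (((2 * (3:ℝ) + 1 - σ) ^ 2 + t ^ 2) / ((2 * (3:ℝ) + σ) ^ 2 + t ^ 2)))) := by
        rw [show ((2:ℝ) * 1 + 1 - σ) = 3 - σ by norm_num, show ((2:ℝ) * 2 + 1 - σ) = 5 - σ by norm_num,
          show ((2:ℝ) * 3 + 1 - σ) = 7 - σ by norm_num, show ((2:ℝ) * 1 + σ) = 2 + σ by norm_num,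
          show ((2:ℝ) * 2 + σ) = 4 + σ by norm_num, show ((2:ℝ) * 3 + σ) = 6 + σ by norm_num,
          ]
        simp only [div_mul_div_comm]
    _ < ((1225 / 1024 : ℝ)) ^ s := key
end

section
/- For every positive integer n, every real σ with 0 < σ < 1/2, and every real t ≥ 0, one has (2n/(2n+1))^(1-2σ) · sqrt(((2n+1-σ)² + t²)/((2n+σ)² + t²)) < 1. -/
/-!
The `t`-dependence only helps: `√((A² + t²)/(B² + t²)) ≤ A/B` when `0 < B ≤ A`. With `p = 1 - 2σ`
and `y = 1/(4n+1)` one has `(2n+1-σ)/(2n+σ) = (1+py)/(1-py)` and `(2n+1)/(2n) = (1+y)/(1-y)`, so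
it remains to show `log (1+py) - log (1-py) < p (log (1+y) - log (1-y))`. Both sides are series
in the odd powers of `y`, and termwise `p ^ (2k+1) ≤ p`, strictly for `k ≥ 1`.
-/

open Real

theorem log_one_add_sub_log_one_sub_mul_lt {p y : ℝ} (hp0 : 0 < p) (hp1 : p < 1) (hy0 : 0 < y)
    (hy1 : y < 1) :
    log (1 + p * y) - log (1 - p * y) < p * (log (1 + y) - log (1 - y)) := by
  have hpy : |p * y| < 1 := by
    rw [abs_of_pos (by positivity)]; nlinarith
  refine hasSum_lt (i := 1) (fun k => ?_) ?_ (hasSum_log_sub_log_of_abs_lt_one hpy)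
    ((hasSum_log_sub_log_of_abs_lt_one (abs_lt.2 ⟨by linarith, hy1⟩)).mul_left p)
  · have : p ^ (2 * k + 1) ≤ p := pow_le_of_le_one hp0.le hp1.le (by omega)
    have : 0 ≤ 2 * (1 / (2 * (k : ℝ) + 1)) * y ^ (2 * k + 1) := by positivity
    rw [mul_pow]
    nlinarith
  · have : p ^ 3 < p := by nlinarith [mul_pos hp0 hp0]
    norm_num [mul_pow]
    nlinarith [pow_pos hy0 3]

theorem sqrt_sq_add_div_sq_add_le_div {A B c : ℝ} (hB : 0 < B) (hBA : B ≤ A) (hc : 0 ≤ c) :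
    √((A ^ 2 + c) / (B ^ 2 + c)) ≤ A / B := by
  rw [sqrt_le_left (div_nonneg (by linarith) hB.le), div_pow,
    div_le_div_iff₀ (by positivity) (by positivity)]
  have : B ^ 2 ≤ A ^ 2 := pow_le_pow_left₀ hB.le hBA 2
  nlinarith

theorem rpow_div_mul_div_lt_one {a σ : ℝ} (ha : 0 < a) (hσ0 : 0 < σ) (hσ : σ < 1 / 2) :
    (a / (a + 1)) ^ (1 - 2 * σ) * ((a + 1 - σ) / (a + σ)) < 1 := by
  have hy0 : 0 < 1 / (2 * a + 1) := by positivity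
  have hy1 : 1 / (2 * a + 1) < 1 := by rw [div_lt_one (by linarith)]; linarith
  have hpy : (1 - 2 * σ) * (1 / (2 * a + 1)) < 1 := by nlinarith
  have hpy0 : 0 < (1 - 2 * σ) * (1 / (2 * a + 1)) := by nlinarith
  have h_base : (a + 1) / a = (1 + 1 / (2 * a + 1)) / (1 - 1 / (2 * a + 1)) := by
    field_simp; ring
  have haσ : 0 < a + σ := by linarith
  have h_ratio : (a + 1 - σ) / (a + σ) =
      (1 + (1 - 2 * σ) * (1 / (2 * a + 1))) / (1 - (1 - 2 * σ) * (1 / (2 * a + 1))) := by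
    rw [div_eq_div_iff haσ.ne' (by linarith)]
    field_simp
    ring
  rw [← inv_div, inv_rpow (by positivity), inv_mul_lt_one₀ (by positivity), h_base, h_ratio,
    lt_rpow_iff_log_lt (div_pos (by linarith) (by linarith)) (div_pos (by linarith) (by linarith)),
    log_div (by linarith) (by linarith), log_div (by linarith) (by linarith)]
  exact log_one_add_sub_log_one_sub_mul_lt (by linarith) (by linarith) hy0 hy1

theorem h2n_lt_one_general (n : ℕ) (hn : 0 < n) (σ t : ℝ) (hσ0 : 0 < σ) (hσ : σ < 1 / 2) :
    ((2 * (n : ℝ)) / (2 * n + 1)) ^ (1 - 2 * σ) *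
        Real.sqrt (((2 * (n : ℝ) + 1 - σ) ^ 2 + t ^ 2) /
          ((2 * (n : ℝ) + σ) ^ 2 + t ^ 2)) < 1 := by
  have ha : (0 : ℝ) < 2 * n := by positivity
  calc _ ≤ ((2 * (n : ℝ)) / (2 * n + 1)) ^ (1 - 2 * σ) * ((2 * n + 1 - σ) / (2 * n + σ)) := by
        gcongr
        exact sqrt_sq_add_div_sq_add_le_div (by linarith) (by linarith) (sq_nonneg t)
    _ < 1 := rpow_div_mul_div_lt_one ha hσ0 hσ

theorem h2n_lt_one (n : ℕ) (hn : 0 < n) (σ t : ℝ) (hσ0 : 0 < σ) (hσ : σ < 1 / 2)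
    (ht : 0 ≤ t) :
    ((2 * (n : ℝ)) / (2 * n + 1)) ^ (1 - 2 * σ) *
        Real.sqrt (((2 * (n : ℝ) + 1 - σ) ^ 2 + t ^ 2) /
          ((2 * (n : ℝ) + σ) ^ 2 + t ^ 2)) < 1 :=
  h2n_lt_one_general n hn σ t hσ0 hσ
end

section
/- For every positive integer n, every real σ with 0 < σ < 1/2, and every real t, one has (1 + 1/(2n))^(1-2σ) > (2n+1-σ)/(2n+σ) ≥ sqrt(((2n+1-σ)² + t²)/((2n+σ)² + t²)). -/
/-!
With `u = 1 / (2m + 1)` and `s = 1 - 2σ` one has `(m + 1 - σ) / (m + σ) = (1 + s u) / (1 - s u)` and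
`1 + 1 / m = (1 + u) / (1 - u)`, so after taking logarithms the first inequality says
`h (s u) < s h u` for `h x = log (1 + x) - log (1 - x)`. This holds because `h` is an odd power series
with positive coefficients and `s ^ (2k + 1) ≤ s`, strictly for `k ≥ 1`.
The second inequality is `(a² + t²) / (b² + t²) ≤ a² / b²` for `0 < b ≤ a`.
-/

open Real

theorem log_one_add_mul_sub_log_one_sub_mul_lt_s14 {s x : ℝ} (hs0 : 0 < s) (hs1 : s < 1)
    (hx0 : 0 < x) (hx1 : x < 1) :
    log (1 + s * x) - log (1 - s * x) < s * (log (1 + x) - log (1 - x)) := by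
  have hsx : |s * x| < 1 := by
    rw [abs_of_pos (by positivity)]; nlinarith
  refine hasSum_lt (i := 1) (fun k => ?_) ?_ (hasSum_log_sub_log_of_abs_lt_one hsx)
    ((hasSum_log_sub_log_of_abs_lt_one (abs_lt.2 ⟨by linarith, hx1⟩)).mul_left s)
  · have : s ^ (2 * k + 1) ≤ s := pow_le_of_le_one hs0.le hs1.le (by omega)
    rw [mul_pow]
    have : 0 ≤ 2 * (1 / (2 * (k : ℝ) + 1)) * x ^ (2 * k + 1) := by positivity
    nlinarith
  · have : s ^ 3 < s := pow_lt_self_of_lt_one₀ hs0 hs1 (by norm_num)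
    norm_num [mul_pow]
    nlinarith [pow_pos hx0 3]

theorem div_lt_one_add_inv_rpow {m σ : ℝ} (hm : 0 < m) (hσ0 : 0 < σ) (hσ : σ < 1 / 2) :
    (m + 1 - σ) / (m + σ) < (1 + 1 / m) ^ (1 - 2 * σ) := by
  set u := 1 / (2 * m + 1)
  have hu0 : 0 < u := by positivity
  have hu1 : u < 1 := by rw [div_lt_one (by positivity)]; linarith
  have hratio : (m + 1 - σ) / (m + σ) = (1 + (1 - 2 * σ) * u) / (1 - (1 - 2 * σ) * u) := by
    have hd : 1 - (1 - 2 * σ) * u ≠ 0 := by nlinarith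
    rw [div_eq_div_iff (by linarith) hd]
    simp only [u]; field_simp; ring
  have hbase : 1 + 1 / m = (1 + u) / (1 - u) := by
    simp only [u]; field_simp; ring
  rw [lt_rpow_iff_log_lt (div_pos (by linarith) (by linarith)) (by positivity), hratio, hbase,
    log_div (by nlinarith) (by nlinarith), log_div (by linarith) (by linarith)]
  exact log_one_add_mul_sub_log_one_sub_mul_lt_s14 (by linarith) (by linarith) hu0 hu1

theorem sqrt_add_sq_div_add_sq_le_div {a b : ℝ} (t : ℝ) (hb : 0 < b) (hba : b ≤ a) :
    √((a ^ 2 + t ^ 2) / (b ^ 2 + t ^ 2)) ≤ a / b := by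
  rw [sqrt_le_left (div_nonneg (by linarith) hb.le), div_pow,
    div_le_div_iff₀ (by positivity) (by positivity)]
  nlinarith [mul_nonneg (sq_nonneg t) (sub_nonneg.2 (pow_le_pow_left₀ hb.le hba 2))]

theorem rpow_gt_ratio (n : ℕ) (hn : 0 < n) (σ t : ℝ) (hσ0 : 0 < σ) (hσ : σ < 1 / 2) :
    (1 + 1 / (2 * (n : ℝ))) ^ (1 - 2 * σ) > (2 * (n : ℝ) + 1 - σ) / (2 * n + σ) ∧
      (2 * (n : ℝ) + 1 - σ) / (2 * n + σ) ≥
        Real.sqrt (((2 * (n : ℝ) + 1 - σ) ^ 2 + t ^ 2) /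
          ((2 * (n : ℝ) + σ) ^ 2 + t ^ 2)) := by
  have hm : (0 : ℝ) < 2 * n := by positivity
  exact ⟨div_lt_one_add_inv_rpow hm hσ0 hσ,
    sqrt_add_sq_div_add_sq_le_div t (by linarith) (by linarith)⟩
end

section
/- Fix real σ with 0 < σ < 1/2 and real t. The function y ↦ (2y/(2y+1))^(1-2σ) · sqrt(((2y+1-σ)² + t²)/((2y+σ)² + t²)) is strictly increasing on (0,∞). -/
theorem H2_strictMonoOn (σ t : ℝ) (hσ0 : 0 < σ) (hσ : σ < 1 / 2) :
    StrictMonoOn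
      (fun y : ℝ => ((2 * y) / (2 * y + 1)) ^ (1 - 2 * σ) *
        Real.sqrt (((2 * y + 1 - σ) ^ 2 + t ^ 2) / ((2 * y + σ) ^ 2 + t ^ 2)))
      (Set.Ioi 0) := by
  have h2σ : 0 < 1 - 2 * σ := by linarith
  have h1σ : 0 < 1 - σ := by linarith
  set u : ℝ → ℝ := fun y => (1 - 2 * σ) * (Real.log (2 * y) - Real.log (2 * y + 1))
      + (1 / 2) * (Real.log ((2 * y + 1 - σ) ^ 2 + t ^ 2)
          - Real.log ((2 * y + σ) ^ 2 + t ^ 2)) with hu_def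
  -- derivative of u at each point of Ioi 0
  have hder : ∀ y ∈ Set.Ioi (0 : ℝ), HasDerivAt u
      ((1 - 2 * σ) * (2 / (2 * y) - 2 / (2 * y + 1))
        + (1 / 2) * ((((2 : ℕ) : ℝ) * (2 * y + 1 - σ) ^ 1 * 2) / ((2 * y + 1 - σ) ^ 2 + t ^ 2)
            - (((2 : ℕ) : ℝ) * (2 * y + σ) ^ 1 * 2) / ((2 * y + σ) ^ 2 + t ^ 2))) y := by
    intro y hy
    have hy0 : (0 : ℝ) < y := hy
    have h2y : (0 : ℝ) < 2 * y := by linarith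
    have h2y1 : (0 : ℝ) < 2 * y + 1 := by linarith
    have hNb : (0 : ℝ) < 2 * y + 1 - σ := by linarith
    have hDb : (0 : ℝ) < 2 * y + σ := by linarith
    have hN : (0 : ℝ) < (2 * y + 1 - σ) ^ 2 + t ^ 2 := by
      have := pow_pos hNb 2; nlinarith [sq_nonneg t]
    have hD : (0 : ℝ) < (2 * y + σ) ^ 2 + t ^ 2 := by
      have := pow_pos hDb 2; nlinarith [sq_nonneg t]
    have hid : HasDerivAt (fun y : ℝ => 2 * y) 2 y := by
      simpa using (hasDerivAt_id y).const_mul (2 : ℝ)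
    have hl1 : HasDerivAt (fun y : ℝ => Real.log (2 * y)) (2 / (2 * y)) y :=
      hid.log (ne_of_gt h2y)
    have hl2 : HasDerivAt (fun y : ℝ => Real.log (2 * y + 1)) (2 / (2 * y + 1)) y :=
      (hid.add_const 1).log (ne_of_gt h2y1)
    have hNd : HasDerivAt (fun y : ℝ => (2 * y + 1 - σ) ^ 2 + t ^ 2)
        (((2 : ℕ) : ℝ) * (2 * y + 1 - σ) ^ 1 * 2) y :=
      (((hid.add_const 1).sub_const σ).pow 2).add_const (t ^ 2)
    have hDd : HasDerivAt (fun y : ℝ => (2 * y + σ) ^ 2 + t ^ 2)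
        (((2 : ℕ) : ℝ) * (2 * y + σ) ^ 1 * 2) y :=
      ((hid.add_const σ).pow 2).add_const (t ^ 2)
    have hl3 := hNd.log (ne_of_gt hN)
    have hl4 := hDd.log (ne_of_gt hD)
    exact ((hl1.sub hl2).const_mul (1 - 2 * σ)).add ((hl3.sub hl4).const_mul (1 / 2))
  have hmono : StrictMonoOn u (Set.Ioi 0) := by
    apply strictMonoOn_of_deriv_pos (convex_Ioi 0)
    · exact fun y hy => ((hder y hy).continuousAt).continuousWithinAt
    · intro y hy
      rw [interior_Ioi] at hy
      rw [(hder y hy).deriv]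
      have hy0 : (0 : ℝ) < y := hy
      have h2y : (0 : ℝ) < 2 * y := by linarith
      have h2y1 : (0 : ℝ) < 2 * y + 1 := by linarith
      have hNb : (0 : ℝ) < 2 * y + 1 - σ := by linarith
      have hDb : (0 : ℝ) < 2 * y + σ := by linarith
      have hN : (0 : ℝ) < (2 * y + 1 - σ) ^ 2 + t ^ 2 := by
        have := pow_pos hNb 2; nlinarith [sq_nonneg t]
      have hD : (0 : ℝ) < (2 * y + σ) ^ 2 + t ^ 2 := by
        have := pow_pos hDb 2; nlinarith [sq_nonneg t]
      have key : (1 - 2 * σ) * (2 / (2 * y) - 2 / (2 * y + 1))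
          + (1 / 2) * ((((2 : ℕ) : ℝ) * (2 * y + 1 - σ) ^ 1 * 2) / ((2 * y + 1 - σ) ^ 2 + t ^ 2)
              - (((2 : ℕ) : ℝ) * (2 * y + σ) ^ 1 * 2) / ((2 * y + σ) ^ 2 + t ^ 2))
          = 2 * (1 - 2 * σ) *
              (σ * (1 - σ) * (2 * y * (2 * y + 1) + σ * (1 - σ))
                + ((2 * y + 1 - σ) ^ 2 + (2 * y + σ) ^ 2 + 2 * y * (2 * y + 1)) * t ^ 2
                + t ^ 4)
            / (2 * y * (2 * y + 1) * (((2 * y + 1 - σ) ^ 2 + t ^ 2)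
                * ((2 * y + σ) ^ 2 + t ^ 2))) := by
        push_cast
        field_simp
        ring
      rw [key]
      apply div_pos
      · have hE1 : (0 : ℝ) < σ * (1 - σ) * (2 * y * (2 * y + 1) + σ * (1 - σ)) := by
          apply mul_pos (mul_pos hσ0 h1σ)
          nlinarith
        have hE2 : (0 : ℝ) ≤ ((2 * y + 1 - σ) ^ 2 + (2 * y + σ) ^ 2 + 2 * y * (2 * y + 1)) * t ^ 2 := by
          positivity
        nlinarith [sq_nonneg (t ^ 2)]
      · positivity
  intro a ha b hb hab
  have heq : ∀ y ∈ Set.Ioi (0 : ℝ),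
      ((2 * y) / (2 * y + 1)) ^ (1 - 2 * σ) *
        Real.sqrt (((2 * y + 1 - σ) ^ 2 + t ^ 2) / ((2 * y + σ) ^ 2 + t ^ 2))
      = Real.exp (u y) := by
    intro y hy
    have hy0 : (0 : ℝ) < y := hy
    have h2y : (0 : ℝ) < 2 * y := by linarith
    have h2y1 : (0 : ℝ) < 2 * y + 1 := by linarith
    have hNb : (0 : ℝ) < 2 * y + 1 - σ := by linarith
    have hDb : (0 : ℝ) < 2 * y + σ := by linarith
    have hN : (0 : ℝ) < (2 * y + 1 - σ) ^ 2 + t ^ 2 := by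
      have := pow_pos hNb 2; nlinarith [sq_nonneg t]
    have hD : (0 : ℝ) < (2 * y + σ) ^ 2 + t ^ 2 := by
      have := pow_pos hDb 2; nlinarith [sq_nonneg t]
    have hg : (0 : ℝ) < (2 * y) / (2 * y + 1) := div_pos h2y h2y1
    have hq : (0 : ℝ) < ((2 * y + 1 - σ) ^ 2 + t ^ 2) / ((2 * y + σ) ^ 2 + t ^ 2) :=
      div_pos hN hD
    rw [Real.rpow_def_of_pos hg]
    rw [show Real.sqrt (((2 * y + 1 - σ) ^ 2 + t ^ 2) / ((2 * y + σ) ^ 2 + t ^ 2))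
        = Real.exp (Real.log (((2 * y + 1 - σ) ^ 2 + t ^ 2) / ((2 * y + σ) ^ 2 + t ^ 2)) / 2) by
      rw [← Real.exp_log (Real.sqrt_pos.mpr hq), Real.log_sqrt hq.le]]
    rw [← Real.exp_add, hu_def]
    congr 1
    rw [Real.log_div (ne_of_gt h2y) (ne_of_gt h2y1), Real.log_div (ne_of_gt hN) (ne_of_gt hD)]
    ring
  simp only
  rw [heq a ha, heq b hb]
  exact Real.exp_lt_exp.mpr (hmono ha hb hab)
end

section
/- Fix a positive integer n and a real t ≥ 1/2. The function σ ↦ (2n/(2n+1))^(1-2σ) · sqrt(((2n+1-σ)² + t²)/((2n+σ)² + t²)) is strictly increasing on (0, 1/2). -/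
/-!
Taking logarithms, the derivative of the exponent is
`2 log (a / b) - u / (u² + t²) - v / (v² + t²)` with `a = 2n + 1`, `b = 2n`, `u = a - σ`,
`v = b + σ`. Since `u + v = 4n + 1` and `|u - v| ≤ 1 ≤ 2t`, the two fractions sum to less than
`4 / (4n + 1)`, while `2 log (1 + 1/(2n)) > 4 / (4n + 1)` by `log (1 + x) > 2x / (x + 2)`.
-/

open Real Set

theorem div_sq_add_add_div_sq_add_lt {x y t : ℝ} (hx : 0 < x) (hy : 0 < y) (ht : t ≠ 0)
    (hxy : (x - y) ^ 2 ≤ 4 * t ^ 2) :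
    x / (x ^ 2 + t ^ 2) + y / (y ^ 2 + t ^ 2) < 4 / (x + y) := by
  have ht2 : 0 < t ^ 2 := by positivity
  rw [div_add_div _ _ (by positivity) (by positivity),
    div_lt_div_iff₀ (by positivity) (by positivity)]
  -- the gap is `x y (4 t² - (x - y)²) + 3 t² (x - y)² + 4 t⁴`
  nlinarith [mul_nonneg (mul_pos hx hy).le (sub_nonneg.2 hxy),
    mul_nonneg ht2.le (sq_nonneg (x - y)), pow_pos ht2 2]

theorem two_div_two_mul_add_one_lt_log_add_one_div {m : ℝ} (hm : 0 < m) :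
    2 / (2 * m + 1) < log ((m + 1) / m) := by
  convert lt_log_one_add_of_pos (inv_pos.2 hm) using 1 <;> field_simp
  ring_nf

noncomputable def logH (a b c t σ : ℝ) : ℝ :=
  (1 - 2 * σ) * log c + (log ((a - σ) ^ 2 + t ^ 2) - log ((b + σ) ^ 2 + t ^ 2)) / 2

theorem rpow_mul_sqrt_eq_exp_logH {a b c t : ℝ} (hc : 0 < c) (ht : t ≠ 0) (σ : ℝ) :
    c ^ (1 - 2 * σ) * √(((a - σ) ^ 2 + t ^ 2) / ((b + σ) ^ 2 + t ^ 2)) =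
      exp (logH a b c t σ) := by
  have hN : 0 < (a - σ) ^ 2 + t ^ 2 := by positivity
  have hD : 0 < (b + σ) ^ 2 + t ^ 2 := by positivity
  rw [rpow_def_of_pos hc, sqrt_eq_rpow, rpow_def_of_pos (div_pos hN hD), ← exp_add,
    log_div hN.ne' hD.ne', logH]
  ring_nf

theorem hasDerivAt_logH (a b c : ℝ) {t : ℝ} (ht : t ≠ 0) (σ : ℝ) :
    HasDerivAt (logH a b c t)
      (-2 * log c - ((a - σ) / ((a - σ) ^ 2 + t ^ 2) + (b + σ) / ((b + σ) ^ 2 + t ^ 2)))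
      σ := by
  have hlin : HasDerivAt (fun σ : ℝ => (1 - 2 * σ) * log c) (-2 * log c) σ := by
    simpa using (((hasDerivAt_id σ).const_mul 2).const_sub 1).mul_const (log c)
  have hN : HasDerivAt (fun σ => (a - σ) ^ 2 + t ^ 2) (2 * (a - σ) * -1) σ := by
    simpa using (((hasDerivAt_id σ).const_sub a).pow 2).add_const (t ^ 2)
  have hD : HasDerivAt (fun σ => (b + σ) ^ 2 + t ^ 2) (2 * (b + σ)) σ := by
    simpa using (((hasDerivAt_id σ).const_add b).pow 2).add_const (t ^ 2)
  refine (hlin.add (((hN.log (by positivity)).sub (hD.log (by positivity))).div_const 2))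
    |>.congr_deriv ?_
  field_simp
  ring

theorem strictMonoOn_logH {a b c t : ℝ} {s : Set ℝ} (hs : Convex ℝ s) (ht : t ≠ 0)
    (h : ∀ σ ∈ interior s,
      (a - σ) / ((a - σ) ^ 2 + t ^ 2) + (b + σ) / ((b + σ) ^ 2 + t ^ 2) < 2 * log c⁻¹) :
    StrictMonoOn (logH a b c t) s := by
  have hcont : Continuous (logH a b c t) :=
    continuous_iff_continuousAt.2 fun σ => (hasDerivAt_logH a b c ht σ).continuousAt
  refine strictMonoOn_of_deriv_pos hs hcont.continuousOn fun σ hσ => ?_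
  rw [(hasDerivAt_logH a b c ht σ).deriv]
  linarith [h σ hσ, log_inv c]

theorem h2n_strictMonoOn (n : ℕ) (hn : 0 < n) (t : ℝ) (ht : 1 / 2 ≤ t) :
    StrictMonoOn
      (fun σ : ℝ => ((2 * (n : ℝ)) / (2 * n + 1)) ^ (1 - 2 * σ) *
        Real.sqrt (((2 * (n : ℝ) + 1 - σ) ^ 2 + t ^ 2) /
          ((2 * (n : ℝ) + σ) ^ 2 + t ^ 2)))
      (Set.Ioo 0 (1 / 2)) := by
  have h2n : (0 : ℝ) < 2 * n := by positivity
  have ht0 : t ≠ 0 := by positivity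
  have hc : (0 : ℝ) < 2 * n / (2 * n + 1) := by positivity
  have hlogH :
      StrictMonoOn (logH (2 * n + 1) (2 * n) (2 * n / (2 * n + 1)) t) (Ioo 0 (1 / 2)) := by
    refine strictMonoOn_logH (convex_Ioo _ _) ht0 fun σ hσ => ?_
    rw [interior_Ioo] at hσ
    calc _ < 4 / (2 * n + 1 - σ + (2 * n + σ)) :=
          div_sq_add_add_div_sq_add_lt (by linarith [hσ.2]) (by linarith [hσ.1]) ht0
            (by nlinarith [hσ.1, hσ.2])
      _ = 2 * (2 / (2 * (2 * n) + 1)) := by ring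
      _ < 2 * log ((2 * n + 1) / (2 * n)) := by
          gcongr
          exact two_div_two_mul_add_one_lt_log_add_one_div h2n
      _ = 2 * log (2 * n / (2 * n + 1))⁻¹ := by rw [inv_div]
  simpa only [rpow_mul_sqrt_eq_exp_logH hc ht0, Function.comp_def] using
    exp_strictMono.comp_strictMonoOn hlogH
end

section
/- Let g(s) = π^(1/2 - s) · Γ(s/2) / Γ((1-s)/2). Then for all s = σ + it with 0 < σ < 1/2 and t ≥ 12, one has |g(s)| < 1. -/
/-!
Write `s/2 = a + iy` and `(1 - s)/2 = conj (b + iy)`, so that `0 ≤ a < b`, `a + b = 1/2`,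
`y ≥ 6` and `‖π^(1/2 - s)‖ = π^(b - a)`. By Gauss's product formula, `‖Γ(a + iy)‖² / ‖Γ(b + iy)‖²`
is the limit of `n^(-2(b - a)) ∏_{j ≤ n} ((b + j)² + y²) / ((a + j)² + y²)`. Each factor is at most
`1 + (b - a) u_j` with `u_j = (2j + 1) / (j² + y²)`, and `1 + δu ≤ ((1 + u) e^(u²/2))^δ`.
The product of the `1 + u_j` telescopes to `((n + 1)² + y²) / y²` and `∑ u_j² ≤ 8 / y`, so
`‖g(s)‖² ≤ (π² e^(4/y) / y²)^(b - a) < 1`.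
-/

open Finset Filter Topology
open scoped Nat

section Elementary

open Real

lemma exp_le_one_add_mul_exp_sq_div_two {u : ℝ} (hu : 0 ≤ u) :
    exp u ≤ (1 + u) * exp (u ^ 2 / 2) := by
  have hlog : u - u ^ 2 / 2 ≤ log (1 + u) := by
    refine le_trans ?_ (le_log_one_add_of_nonneg hu)
    rw [le_div_iff₀ (by linarith)]
    nlinarith [pow_nonneg hu 3]
  calc exp u = exp (u - u ^ 2 / 2) * exp (u ^ 2 / 2) := by rw [← exp_add]; ring_nf
    _ ≤ (1 + u) * exp (u ^ 2 / 2) := by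
      gcongr
      exact (le_log_iff_exp_le (by linarith)).mp hlog

lemma one_add_mul_le_rpow {u δ : ℝ} (hu : 0 ≤ u) (hδ : 0 ≤ δ) :
    1 + δ * u ≤ ((1 + u) * exp (u ^ 2 / 2)) ^ δ :=
  calc 1 + δ * u ≤ exp (u * δ) := by linarith [add_one_le_exp (u * δ)]
    _ = exp u ^ δ := exp_mul u δ
    _ ≤ ((1 + u) * exp (u ^ 2 / 2)) ^ δ :=
      rpow_le_rpow (exp_pos u).le (exp_le_one_add_mul_exp_sq_div_two hu) hδ

lemma prod_range_one_add_div_sq_add_sq {y : ℝ} (hy : y ≠ 0) (n : ℕ) :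
    ∏ j ∈ range n, (1 + (2 * j + 1) / ((j : ℝ) ^ 2 + y ^ 2)) = (n ^ 2 + y ^ 2) / y ^ 2 := by
  induction n with
  | zero => simp [hy]
  | succ n ih =>
    rw [prod_range_succ, ih]
    field_simp
    push_cast
    ring

lemma sq_div_sq_add_sq_le {y : ℝ} (hy : 6 ≤ y) {j : ℝ} (hj : 0 ≤ j) :
    ((2 * j + 1) / (j ^ 2 + y ^ 2)) ^ 2 ≤ 8 / (j + y) - 8 / (j + 1 + y) := by
  have hy0 : 0 < y := by linarith
  have hpoly : (2 * j + 1) ^ 2 * ((j + y) * (j + y + 1)) ≤ 8 * (j ^ 2 + y ^ 2) ^ 2 := by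
    calc (2 * j + 1) ^ 2 * ((j + y) * (j + y + 1))
        ≤ (2 * j + y / 6) ^ 2 * ((j + y) * (j + y + y / 6)) := by gcongr <;> linarith
      _ ≤ 8 * (j ^ 2 + y ^ 2) ^ 2 := by
        nlinarith [sq_nonneg (j - y), sq_nonneg (j ^ 2 - y ^ 2), mul_nonneg hj hy0.le,
          mul_nonneg (mul_nonneg hj hj) hy0.le,
          mul_nonneg (mul_nonneg hj hj) (mul_nonneg hj hy0.le)]
  rw [div_sub_div _ _ (by positivity) (by positivity), div_pow,
    div_le_div_iff₀ (by positivity) (by positivity)]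
  nlinarith [hpoly]

lemma sum_range_sq_div_sq_add_sq_le {y : ℝ} (hy : 6 ≤ y) (n : ℕ) :
    ∑ j ∈ range n, ((2 * j + 1) / ((j : ℝ) ^ 2 + y ^ 2)) ^ 2 ≤ 8 / y := by
  have hy0 : 0 < y := by linarith
  calc ∑ j ∈ range n, ((2 * j + 1) / ((j : ℝ) ^ 2 + y ^ 2)) ^ 2
      ≤ ∑ j ∈ range n, (8 / ((j : ℝ) + y) - 8 / (((j + 1 : ℕ) : ℝ) + y)) :=
        sum_le_sum fun j _ => by
          rw [Nat.cast_succ]; exact sq_div_sq_add_sq_le hy j.cast_nonneg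
    _ = 8 / y - 8 / (n + y) := by rw [sum_range_sub']; simp
    _ ≤ 8 / y := by linarith [show 0 ≤ 8 / ((n : ℝ) + y) by positivity]

lemma add_sq_add_sq_div_le_one_add_mul {a b y : ℝ} (ha : 0 ≤ a) (hab : a ≤ b)
    (hab1 : a + b ≤ 1) (hy : y ≠ 0) {j : ℝ} (hj : 0 ≤ j) :
    ((b + j) ^ 2 + y ^ 2) / ((a + j) ^ 2 + y ^ 2)
      ≤ 1 + (b - a) * ((2 * j + 1) / (j ^ 2 + y ^ 2)) := by
  have hsplit : ((b + j) ^ 2 + y ^ 2) / ((a + j) ^ 2 + y ^ 2)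
      = 1 + (b - a) * ((2 * j + a + b) / ((a + j) ^ 2 + y ^ 2)) := by
    have : (a + j) ^ 2 + y ^ 2 ≠ 0 := by positivity
    field_simp
    ring
  rw [hsplit]
  gcongr 1 + _ * ?_
  exact div_le_div₀ (by positivity) (by linarith) (by positivity) (by nlinarith)

lemma prod_range_add_sq_add_sq_div_le {a b y : ℝ} (ha : 0 ≤ a) (hab : a ≤ b) (hab1 : a + b ≤ 1)
    (hy : 6 ≤ y) (n : ℕ) :
    ∏ j ∈ range n, (((b + j) ^ 2 + y ^ 2) / ((a + j) ^ 2 + y ^ 2))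
      ≤ ((n ^ 2 + y ^ 2) / y ^ 2 * exp (4 / y)) ^ (b - a) := by
  have hy0 : 0 < y := by linarith
  set u : ℕ → ℝ := fun j => (2 * j + 1) / ((j : ℝ) ^ 2 + y ^ 2)
  have hu : ∀ j, 0 ≤ u j := fun j => by positivity
  calc ∏ j ∈ range n, (((b + j) ^ 2 + y ^ 2) / ((a + j) ^ 2 + y ^ 2))
      ≤ ∏ j ∈ range n, ((1 + u j) * exp (u j ^ 2 / 2)) ^ (b - a) :=
        prod_le_prod (fun j _ => by positivity) fun j _ =>
          (add_sq_add_sq_div_le_one_add_mul ha hab hab1 hy0.ne' j.cast_nonneg).trans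
            (one_add_mul_le_rpow (hu j) (sub_nonneg.2 hab))
    _ = ((∏ j ∈ range n, (1 + u j)) * exp (∑ j ∈ range n, u j ^ 2 / 2)) ^ (b - a) := by
        rw [finsetProd_rpow _ _ fun j _ => by positivity, prod_mul_distrib, exp_sum]
    _ ≤ ((n ^ 2 + y ^ 2) / y ^ 2 * exp (4 / y)) ^ (b - a) := by
        have hsum : ∑ j ∈ range n, u j ^ 2 / 2 ≤ 4 / y := by
          rw [← sum_div]
          linarith [sum_range_sq_div_sq_add_sq_le hy n, show 8 / y / 2 = 4 / y by ring]
        rw [prod_range_one_add_div_sq_add_sq hy0.ne']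
        gcongr

lemma tendsto_add_one_sq_add_sq_div_sq (y : ℝ) :
    Tendsto (fun n : ℕ => (((n : ℝ) + 1) ^ 2 + y ^ 2) / n ^ 2) atTop (𝓝 1) := by
  have h : Tendsto (fun n : ℕ => (1 + 1 / (n : ℝ)) ^ 2 + y ^ 2 * (1 / (n : ℝ)) ^ 2) atTop
      (𝓝 ((1 + 0) ^ 2 + y ^ 2 * 0 ^ 2)) :=
    ((tendsto_const_nhds.add tendsto_one_div_atTop_nhds_zero_nat).pow 2).add
      ((tendsto_one_div_atTop_nhds_zero_nat.pow 2).const_mul _)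
  rw [show ((1 : ℝ) + 0) ^ 2 + y ^ 2 * 0 ^ 2 = 1 by ring] at h
  refine h.congr' ?_
  filter_upwards [eventually_gt_atTop 0] with n hn
  field_simp

lemma pi_sq_mul_exp_div_sq_lt_one {y : ℝ} (hy : 6 ≤ y) : π ^ 2 * (exp (4 / y) / y ^ 2) < 1 := by
  have he : exp (4 / y) < 2.72 :=
    (exp_le_exp.2 (by rw [div_le_one (by positivity)]; linarith)).trans_lt
      (exp_one_lt_d9.trans (by norm_num))
  rw [mul_div_assoc', div_lt_one (by positivity)]
  nlinarith [pi_lt_d2, pi_pos, exp_pos (4 / y)]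

end Elementary

open Complex ComplexConjugate

lemma norm_GammaSeq_sq (x y : ℝ) {n : ℕ} (hn : 0 < n) :
    ‖GammaSeq (x + y * I) n‖ ^ 2
      = ((n : ℝ) ^ 2) ^ x * (n ! : ℝ) ^ 2 / ∏ j ∈ range (n + 1), ((x + j) ^ 2 + y ^ 2) := by
  have hn' : (0 : ℝ) < n := Nat.cast_pos.2 hn
  rw [GammaSeq, norm_div, norm_mul, norm_prod, div_pow, mul_pow, ← prod_pow,
    ← ofReal_natCast, norm_cpow_eq_rpow_re_of_pos hn', norm_natCast]
  congr 2
  · rw [show (x + y * I : ℂ).re = x by simp, ← Real.rpow_natCast, ← Real.rpow_natCast,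
      ← Real.rpow_mul hn'.le, ← Real.rpow_mul hn'.le, mul_comm]
  · funext j
    rw [show (x : ℂ) + y * I + j = ((x + j : ℝ) : ℂ) + y * I by push_cast; ring,
      Complex.sq_norm, normSq_add_mul_I]

lemma norm_GammaSeq_sq_le_mul {a b y : ℝ} (ha : 0 ≤ a) (hab : a ≤ b) (hab1 : a + b ≤ 1)
    (hy : 6 ≤ y) {n : ℕ} (hn : 0 < n) :
    ‖GammaSeq (a + y * I) n‖ ^ 2
      ≤ ((((n : ℝ) + 1) ^ 2 + y ^ 2) / n ^ 2 * (Real.exp (4 / y) / y ^ 2)) ^ (b - a)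
        * ‖GammaSeq (b + y * I) n‖ ^ 2 := by
  have hy0 : 0 < y := by linarith
  have hN : (0 : ℝ) < (n : ℝ) ^ 2 := by positivity
  set Z : ℝ := (((n : ℝ) + 1) ^ 2 + y ^ 2) / y ^ 2 * Real.exp (4 / y)
  set Pa := ∏ j ∈ range (n + 1), ((a + j) ^ 2 + y ^ 2)
  set Pb := ∏ j ∈ range (n + 1), ((b + j) ^ 2 + y ^ 2)
  have hPa : 0 < Pa := prod_pos fun j _ => by positivity
  have hPb : 0 < Pb := prod_pos fun j _ => by positivity
  have hratio : Pb / Pa ≤ Z ^ (b - a) := by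
    have h := prod_range_add_sq_add_sq_div_le ha hab hab1 hy (n + 1)
    push_cast at h
    rwa [← prod_div_distrib]
  have hpow : ((n : ℝ) ^ 2) ^ a = ((n : ℝ) ^ 2) ^ b / ((n : ℝ) ^ 2) ^ (b - a) := by
    rw [← Real.rpow_sub hN, sub_sub_cancel]
  have hbase : (((n : ℝ) + 1) ^ 2 + y ^ 2) / n ^ 2 * (Real.exp (4 / y) / y ^ 2)
      = Z / (n : ℝ) ^ 2 := by
    simp only [Z]; field_simp
  rw [norm_GammaSeq_sq a y hn, norm_GammaSeq_sq b y hn, hbase,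
    Real.div_rpow (by positivity) hN.le, hpow]
  calc ((n : ℝ) ^ 2) ^ b / ((n : ℝ) ^ 2) ^ (b - a) * (n ! : ℝ) ^ 2 / Pa
      = ((n : ℝ) ^ 2) ^ b * (n ! : ℝ) ^ 2 / Pb * (Pb / Pa) / ((n : ℝ) ^ 2) ^ (b - a) := by
        field_simp
    _ ≤ ((n : ℝ) ^ 2) ^ b * (n ! : ℝ) ^ 2 / Pb * Z ^ (b - a) / ((n : ℝ) ^ 2) ^ (b - a) := by
        gcongr
    _ = Z ^ (b - a) / ((n : ℝ) ^ 2) ^ (b - a) * (((n : ℝ) ^ 2) ^ b * (n ! : ℝ) ^ 2 / Pb) := by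
        ring

theorem norm_Gamma_sq_le_mul {a b y : ℝ} (ha : 0 ≤ a) (hab : a ≤ b) (hab1 : a + b ≤ 1)
    (hy : 6 ≤ y) :
    ‖Gamma (a + y * I)‖ ^ 2 ≤ (Real.exp (4 / y) / y ^ 2) ^ (b - a) * ‖Gamma (b + y * I)‖ ^ 2 := by
  have hseq (x : ℝ) : Tendsto (fun n => ‖GammaSeq (x + y * I) n‖ ^ 2) atTop
      (𝓝 (‖Gamma (x + y * I)‖ ^ 2)) :=
    (GammaSeq_tendsto_Gamma _).norm.pow 2
  have hbound := (((tendsto_add_one_sq_add_sq_div_sq y).mul_const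
    (Real.exp (4 / y) / y ^ 2)).rpow_const (Or.inr (sub_nonneg.2 hab))).mul (hseq b)
  rw [one_mul] at hbound
  refine le_of_tendsto_of_tendsto (hseq a) hbound ?_
  filter_upwards [eventually_gt_atTop 0] with n hn
  exact norm_GammaSeq_sq_le_mul ha hab hab1 hy hn

lemma pi_rpow_mul_norm_Gamma_div_lt_one {a b y : ℝ} (ha : 0 ≤ a) (hab : a < b)
    (hab1 : a + b ≤ 1) (hy : 6 ≤ y) :
    Real.pi ^ (b - a) * ‖Gamma (a + y * I)‖ / ‖Gamma (b + y * I)‖ < 1 := by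
  have hGamma : 0 < ‖Gamma (b + y * I)‖ :=
    norm_pos_iff.2 (Gamma_ne_zero_of_re_pos (by simpa using ha.trans_lt hab))
  rw [← sq_lt_one_iff₀ (by positivity), div_pow, mul_pow, div_lt_one (by positivity),
    Real.rpow_pow_comm Real.pi_pos.le]
  calc (Real.pi ^ 2) ^ (b - a) * ‖Gamma (a + y * I)‖ ^ 2
      ≤ (Real.pi ^ 2) ^ (b - a)
          * ((Real.exp (4 / y) / y ^ 2) ^ (b - a) * ‖Gamma (b + y * I)‖ ^ 2) := by
        gcongr
        exact norm_Gamma_sq_le_mul ha hab.le hab1 hy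
    _ = (Real.pi ^ 2 * (Real.exp (4 / y) / y ^ 2)) ^ (b - a) * ‖Gamma (b + y * I)‖ ^ 2 := by
        rw [Real.mul_rpow (by positivity) (by positivity), mul_assoc]
    _ < ‖Gamma (b + y * I)‖ ^ 2 := by
        rw [mul_lt_iff_lt_one_left (by positivity)]
        exact Real.rpow_lt_one (by positivity) (pi_sq_mul_exp_div_sq_lt_one hy) (sub_pos.2 hab)

theorem abs_g_lt_one (s : ℂ) (hσ0 : 0 < s.re) (hσ : s.re < 1 / 2) (ht : 12 ≤ s.im) :
    ‖(Real.pi : ℂ) ^ ((1 : ℂ) / 2 - s) * Complex.Gamma (s / 2) /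
      Complex.Gamma ((1 - s) / 2)‖ < 1 := by
  have hz : s / 2 = ↑(s.re / 2) + ↑(s.im / 2) * I := by
    conv_lhs => rw [← re_add_im s]
    push_cast
    ring
  have hw : (1 - s) / 2 = conj (↑((1 - s.re) / 2) + ↑(s.im / 2) * I) := by
    conv_lhs => rw [← re_add_im s]
    rw [map_add, map_mul, conj_ofReal, conj_ofReal, conj_I]
    push_cast
    ring
  have hpi : ‖(Real.pi : ℂ) ^ ((1 : ℂ) / 2 - s)‖ = Real.pi ^ ((1 - s.re) / 2 - s.re / 2) := by
    rw [norm_cpow_eq_rpow_re_of_pos Real.pi_pos, sub_re, div_ofNat_re, one_re]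
    ring_nf
  rw [norm_div, norm_mul, hpi, hz, hw, Gamma_conj, norm_conj]
  exact pi_rpow_mul_norm_Gamma_div_lt_one (by linarith) (by linarith) (by linarith) (by linarith)
end
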